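/- Let (V,E) be a finite digraph and Q an acyclic flow on (V,E) with div Q = μ₁ − μ₂ for probability measures μ₁, μ₂ on V. Then there exists a coupling ρ between μ₁ and μ₂ such that ρ(x,y) = 0 for every pair x ≠ y for which there is no directed path from x to y in (V,E(Q)), and moreover ∑_{x≠y} ρ(x,y) = (1/2) ∑_{x∈V} |μ₁(x) − μ₂(x)|. -/

import Mathlib

open scoped BigOperators

variable {V : Type*}

/-- A directed path in the digraph `(V, E)`: a nonempty list of vertices whose
consecutive pairs are directed edges. -/
def IsDipath (E : Set (V × V)) (l : List V) : Prop :=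
  l ≠ [] ∧ l.Chain' (fun a b => (a, b) ∈ E)

/-- The list of directed edges of a path. -/
def pathEdges (l : List V) : List (V × V) := l.zip l.tail

/-- The unit flow `Q_γ` along a path: `1` on the edges of the path and `0` elsewhere. -/
noncomputable def pathFlow (l : List V) : V × V → ℝ :=
  Set.indicator {e | e ∈ pathEdges l} 1

/-- A flow on the digraph `(V, E)`: nonnegative and supported on `E`. -/
def IsFlow (E : Set (V × V)) (Q : V × V → ℝ) : Prop :=
  (∀ e, 0 ≤ Q e) ∧ ∀ e, e ∉ E → Q e = 0

/-- The divergence of a flow at a vertex. -/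
noncomputable def divergence (Q : V × V → ℝ) (x : V) : ℝ :=
  (∑' y, Q (x, y)) - ∑' y, Q (y, x)

/-- A relation is acyclic if it has no directed cycles. -/
def AcyclicRel (r : V → V → Prop) : Prop := ∀ x, ¬ Relation.TransGen r x x

/-- The edge relation of a digraph. -/
def edgeRel (E : Set (V × V)) : V → V → Prop := fun a b => (a, b) ∈ E

/-- The partial order induced by an acyclic digraph: `x ≤ y` iff `x = y` or there is
a directed path from `x` to `y`. -/
def inducedLE (E : Set (V × V)) : V → V → Prop :=
  Relation.ReflTransGen (edgeRel E)

/-- A finitely decomposable flow: a pointwise sum `∑ₙ qₙ Q_{γₙ}` over finite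
self-avoiding directed paths with summable nonnegative weights. -/
def FinDecomposable (E : Set (V × V)) (Q : V × V → ℝ) : Prop :=
  ∃ (γ : ℕ → List V) (q : ℕ → ℝ),
    (∀ n, IsDipath E (γ n)) ∧ (∀ n, (γ n).Nodup) ∧ (∀ n, 0 ≤ q n) ∧ Summable q ∧
    ∀ e, Q e = ∑' n, q n * pathFlow (γ n) e

/-- A probability measure on a countable set, as a nonnegative function of total sum `1`. -/
def IsProb (μ : V → ℝ) : Prop := (∀ x, 0 ≤ μ x) ∧ HasSum μ 1

/-- A coupling of `μ₁` and `μ₂`: a probability on `V × V` with the given marginals. -/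
def IsCoupling (μ₁ μ₂ : V → ℝ) (ρ : V × V → ℝ) : Prop :=
  (∀ p, 0 ≤ ρ p) ∧ (∀ x, HasSum (fun y => ρ (x, y)) (μ₁ x)) ∧
    ∀ y, HasSum (fun x => ρ (x, y)) (μ₂ y)

/-- Stochastic domination: `∑ f μ₁ ≤ ∑ f μ₂` for every bounded increasing `f`. -/
def StochDom (le : V → V → Prop) (μ₁ μ₂ : V → ℝ) : Prop :=
  ∀ f : V → ℝ, (∃ C, ∀ x, |f x| ≤ C) → (∀ x y, le x y → f x ≤ f y) →
    ∑' x, f x * μ₁ x ≤ ∑' x, f x * μ₂ x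

/-- Finite-case divergence. -/
noncomputable def divergenceF [Fintype V] (Q : V × V → ℝ) (x : V) : ℝ :=
  (∑ y, Q (x, y)) - ∑ y, Q (y, x)

/-- Probability measure on a finite set. -/
def IsProbF [Fintype V] (μ : V → ℝ) : Prop := (∀ x, 0 ≤ μ x) ∧ ∑ x, μ x = 1

/-- Coupling on a finite set. -/
def IsCouplingF [Fintype V] (μ₁ μ₂ : V → ℝ) (ρ : V × V → ℝ) : Prop :=
  (∀ p, 0 ≤ ρ p) ∧ (∀ x, ∑ y, ρ (x, y) = μ₁ x) ∧ ∀ y, ∑ x, ρ (x, y) = μ₂ y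

/-- Stochastic domination on a finite set. -/
def StochDomF [Fintype V] (le : V → V → Prop) (μ₁ μ₂ : V → ℝ) : Prop :=
  ∀ f : V → ℝ, (∀ x y, le x y → f x ≤ f y) → ∑ x, f x * μ₁ x ≤ ∑ x, f x * μ₂ x

/-- The cost of a path: the sum of the weights of its edges. -/
noncomputable def pathCost (w : V × V → ℝ) (l : List V) : ℝ := ((pathEdges l).map w).sum

/-- The geodesic cost associated to a weight function on a digraph. -/
noncomputable def geoCost (E : Set (V × V)) (w : V × V → ℝ) (x y : V) : ℝ :=
  sInf {r | ∃ l, IsDipath E l ∧ l.head? = some x ∧ l.getLast? = some y ∧ pathCost w l = r}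

/-!
Split `μ₁ - μ₂ = α - β` into its positive and negative parts. The diagonal coupling of
`min μ₁ μ₂` with itself plus a coupling of `α` with `β` supported on the order of `E(Q)` is
the required coupling, and it moves exactly `∑ α = ½ ∑ |μ₁ - μ₂|` off the diagonal.

A coupling of `α` with `β` is built by induction on the number of edges of `E(Q)`. Acyclicity
provides an edge `(u, w)` of `E(Q)` with `w` a sink. Deleting it changes the divergence by
`q = Q (u, w)` at both ends, so the smaller flow gives a coupling of `α` with
`β + q δᵤ - q δ_w`; the coupling is repaired by moving mass `q` of its column `u` to
column `w`, which is allowed since `u → w`. At the sink `w` all of the inflow ends up in `β`,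
so `q ≤ β w` and the intermediate target is still nonnegative.
-/

theorem AcyclicRel.mono {r r' : V → V → Prop} (hr : AcyclicRel r) (h : r' ≤ r) :
    AcyclicRel r' :=
  fun x hx => hr x (Relation.TransGen.mono h x x hx)

theorem AcyclicRel.exists_sink_edge [Finite V] {r : V → V → Prop} (hr : AcyclicRel r)
    {a b : V} (hab : r a b) : ∃ u w, r u w ∧ ∀ z, ¬ r w z := by
  have : IsTrans V (flip (Relation.TransGen r)) := ⟨fun _ _ _ h₁ h₂ => h₂.trans h₁⟩
  have : Std.Irrefl (flip (Relation.TransGen r)) := ⟨hr⟩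
  obtain ⟨w, haw, hmax⟩ :=
    (Finite.wellFounded_of_trans_of_irrefl (flip (Relation.TransGen r))).has_min
      {w | Relation.TransGen r a w} ⟨b, .single hab⟩
  obtain ⟨u, -, huw⟩ := Relation.TransGen.tail'_iff.mp haw
  exact ⟨u, w, huw, fun z hwz => hmax z (haw.tail hwz) (.single hwz)⟩

theorem exists_le_sum_eq {ι : Type*} [Fintype ι] (s : ι → ℝ) (hs : ∀ i, 0 ≤ s i) {q : ℝ}
    (hq₀ : 0 ≤ q) (hq : q ≤ ∑ i, s i) :
    ∃ t : ι → ℝ, (∀ i, 0 ≤ t i) ∧ (∀ i, t i ≤ s i) ∧ ∑ i, t i = q := by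
  have hS : 0 ≤ ∑ i, s i := Finset.sum_nonneg fun i _ => hs i
  have hc : q / ∑ i, s i ≤ 1 := div_le_one_of_le₀ hq hS
  refine ⟨fun i => s i * (q / ∑ i, s i), fun i => mul_nonneg (hs i) (div_nonneg hq₀ hS),
    fun i => mul_le_of_le_one_right (hs i) hc, ?_⟩
  rw [← Finset.sum_mul]
  rcases hS.eq_or_lt with h | h
  · rw [← h, zero_mul]
    exact (le_antisymm (h ▸ hq) hq₀).symm
  · exact mul_div_cancel₀ q h.ne'

theorem add_single_sub_single_nonneg [DecidableEq V] {β : V → ℝ} (hβ : ∀ x, 0 ≤ β x)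
    {u w : V} (hne : u ≠ w) {q : ℝ} (hq₀ : 0 ≤ q) (hq : q ≤ β w) (x : V) :
    0 ≤ (β + Pi.single u q - Pi.single w q : V → ℝ) x := by
  rcases eq_or_ne x w with rfl | hx
  · simpa [hne] using hq
  · simp only [Pi.add_apply, Pi.sub_apply, Pi.single_apply, hx, if_false, sub_zero]
    split_ifs <;> linarith [hβ x]

section Finite

variable [Fintype V]

theorem divergenceF_sub (Q R : V × V → ℝ) (x : V) :
    divergenceF (Q - R) x = divergenceF Q x - divergenceF R x := by
  simp only [divergenceF, Pi.sub_apply, Finset.sum_sub_distrib]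
  ring

theorem divergenceF_single [DecidableEq V] (u w : V) (q : ℝ) (x : V) :
    divergenceF (Pi.single (u, w) q) x =
      (Pi.single u q : V → ℝ) x - (Pi.single w q : V → ℝ) x := by
  simp [divergenceF, Pi.single_apply, Prod.ext_iff, ite_and, eq_comm]

theorem divergenceF_update_zero [DecidableEq V] (Q : V × V → ℝ) (u w x : V) :
    divergenceF (Function.update Q (u, w) 0) x =
      divergenceF Q x - (Pi.single u (Q (u, w)) : V → ℝ) x +
        (Pi.single w (Q (u, w)) : V → ℝ) x := by
  rw [Pi.update_eq_sub_add_single, Pi.single_zero, add_zero, divergenceF_sub, divergenceF_single]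
  ring

theorem apply_le_of_divergenceF_eq_sub {Q : V × V → ℝ} (hQ : ∀ e, 0 ≤ Q e) {α β : V → ℝ}
    {w : V} (hα : 0 ≤ α w) (hw : ∀ z, Q (w, z) = 0) (hdiv : divergenceF Q w = α w - β w)
    (u : V) : Q (u, w) ≤ β w := by
  have hin : Q (u, w) ≤ ∑ z, Q (z, w) :=
    Finset.single_le_sum (f := fun z => Q (z, w)) (fun z _ => hQ (z, w)) (Finset.mem_univ u)
  simp only [divergenceF, hw, Finset.sum_const_zero, zero_sub] at hdiv
  linarith

theorem exists_isCouplingF_self {m : V → ℝ} (hm : ∀ x, 0 ≤ m x) :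
    ∃ τ, IsCouplingF m m τ ∧ ∀ x y, x ≠ y → τ (x, y) = 0 := by
  classical
  refine ⟨fun p => if p.1 = p.2 then m p.1 else 0, ⟨fun p => ?_, fun x => ?_, fun y => ?_⟩,
    fun x y hxy => if_neg hxy⟩
  · dsimp only
    split_ifs <;> simp [hm]
  all_goals simp

namespace IsCouplingF

variable {α β : V → ℝ} {σ : V × V → ℝ}

theorem apply_le_min (hσ : IsCouplingF α β σ) (x y : V) : σ (x, y) ≤ min (α x) (β y) :=
  le_min (hσ.2.1 x ▸ Finset.single_le_sum (fun z _ => hσ.1 (x, z)) (Finset.mem_univ y))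
    (hσ.2.2 y ▸ Finset.single_le_sum (fun z _ => hσ.1 (z, y)) (Finset.mem_univ x))

theorem sum_eq_left (hσ : IsCouplingF α β σ) : ∑ p, σ p = ∑ x, α x := by
  rw [Fintype.sum_prod_type]
  exact Finset.sum_congr rfl fun x _ => hσ.2.1 x

theorem sum_eq_right (hσ : IsCouplingF α β σ) : ∑ p, σ p = ∑ y, β y := by
  rw [Fintype.sum_prod_type_right]
  exact Finset.sum_congr rfl fun y _ => hσ.2.2 y

theorem add {α' β' : V → ℝ} {τ : V × V → ℝ} (hσ : IsCouplingF α β σ)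
    (hτ : IsCouplingF α' β' τ) : IsCouplingF (α + α') (β + β') (σ + τ) :=
  ⟨fun p => add_nonneg (hσ.1 p) (hτ.1 p),
    fun x => by simp only [Pi.add_apply, Finset.sum_add_distrib, hσ.2.1, hτ.2.1],
    fun y => by simp only [Pi.add_apply, Finset.sum_add_distrib, hσ.2.2, hτ.2.2]⟩

theorem exists_move_column [DecidableEq V] (hσ : IsCouplingF α β σ) (u w : V) {q : ℝ}
    (hq₀ : 0 ≤ q) (hq : q ≤ β u) :
    ∃ τ, IsCouplingF α (β - Pi.single u q + Pi.single w q) τ ∧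
      ∀ x y, 0 < τ (x, y) → 0 < σ (x, y) ∨ y = w ∧ 0 < σ (x, u) := by
  obtain ⟨t, ht₀, hts, ht⟩ :=
    exists_le_sum_eq (fun x => σ (x, u)) (fun x => hσ.1 _) hq₀ (hσ.2.2 u ▸ hq)
  refine ⟨fun p => σ p - (if p.2 = u then t p.1 else 0) + (if p.2 = w then t p.1 else 0),
    ⟨?_, fun x => ?_, fun y => ?_⟩, fun x y hpos => ?_⟩
  · rintro ⟨x, y⟩
    have : (if y = u then t x else 0) ≤ σ (x, y) := by
      split_ifs with h
      · exact h ▸ hts x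
      · exact hσ.1 _
    have : 0 ≤ if y = w then t x else 0 := by split_ifs <;> simp [ht₀]
    linarith
  · simp [Finset.sum_add_distrib, Finset.sum_sub_distrib, hσ.2.1]
  · simp [Finset.sum_add_distrib, Finset.sum_sub_distrib, hσ.2.2, Pi.single_apply, ht,
      Finset.sum_ite_irrel]
  · by_contra! h
    have hσxy : σ (x, y) = 0 := le_antisymm (h.1.trans_eq' rfl) (hσ.1 _)
    have : (if y = w then t x else 0) ≤ 0 := by
      split_ifs with hy
      · exact (hts x).trans (h.2 hy)
      · rfl
    have : 0 ≤ if y = u then t x else 0 := by split_ifs <;> simp [ht₀]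
    simp only [hσxy] at hpos
    linarith

theorem exists_add_diagonal {μ₁ μ₂ : V → ℝ} (h₁ : ∀ x, 0 ≤ μ₁ x) (h₂ : ∀ x, 0 ≤ μ₂ x)
    (hσ : IsCouplingF (fun x => (μ₁ x - μ₂ x)⁺) (fun x => (μ₁ x - μ₂ x)⁻) σ) :
    ∃ τ, IsCouplingF μ₁ μ₂ (σ + τ) ∧ (∀ x y, x ≠ y → τ (x, y) = 0) ∧
      ∑ p : V × V, Set.indicator {p : V × V | p.1 ≠ p.2} (σ + τ) p =
        1 / 2 * ∑ x, |μ₁ x - μ₂ x| := by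
  have hσ_diag : ∀ x, σ (x, x) = 0 := fun x =>
    le_antisymm ((hσ.apply_le_min x x).trans_eq (posPart_inf_negPart_eq_zero _)) (hσ.1 _)
  have hμ₁ : (fun x => (μ₁ x - μ₂ x)⁺) + (fun x => min (μ₁ x) (μ₂ x)) = μ₁ :=
    funext fun x => by simp [inf_eq_sub_posPart_sub]
  have hμ₂ : (fun x => (μ₁ x - μ₂ x)⁻) + (fun x => min (μ₁ x) (μ₂ x)) = μ₂ :=
    funext fun x => by
      have := congrFun hμ₁ x
      simp only [Pi.add_apply] at this ⊢
      linarith [posPart_sub_negPart (μ₁ x - μ₂ x)]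
  obtain ⟨τ, hτ, hτ_diag⟩ := exists_isCouplingF_self fun x => le_min (h₁ x) (h₂ x)
  refine ⟨τ, by simpa only [hμ₁, hμ₂] using hσ.add hτ, hτ_diag, ?_⟩
  calc _ = ∑ p, σ p := Finset.sum_congr rfl fun ⟨x, y⟩ _ => by
        by_cases h : x = y
        · subst h
          simp [hσ_diag]
        · simp [h, hτ_diag x y h]
    _ = 1 / 2 * (∑ x, (μ₁ x - μ₂ x)⁺ + ∑ x, (μ₁ x - μ₂ x)⁻) := by
        rw [← hσ.sum_eq_left, ← hσ.sum_eq_right]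
        ring
    _ = 1 / 2 * ∑ x, |μ₁ x - μ₂ x| := by
        simp [← Finset.sum_add_distrib, posPart_add_negPart]

end IsCouplingF

theorem exists_coupling_of_flow_eq_zero {Q : V × V → ℝ} (hQ : ∀ e, Q e = 0) {α β : V → ℝ}
    (hα : ∀ x, 0 ≤ α x) (hdiv : ∀ x, divergenceF Q x = α x - β x) :
    ∃ σ, IsCouplingF α β σ ∧ ∀ x y, 0 < σ (x, y) → x = y := by
  obtain rfl : α = β := funext fun x => by
    have := hdiv x
    simp only [divergenceF, hQ, Finset.sum_const_zero, sub_zero] at this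
    linarith
  obtain ⟨σ, hσ, hσ_diag⟩ := exists_isCouplingF_self hα
  exact ⟨σ, hσ, fun x y hxy => by_contra fun h => hxy.ne' (hσ_diag x y h)⟩

theorem exists_coupling_of_acyclic_flow [DecidableEq V] (Q : V × V → ℝ) (hQ : ∀ e, 0 ≤ Q e)
    (hacyc : AcyclicRel fun a b => 0 < Q (a, b)) (α β : V → ℝ) (hα : ∀ x, 0 ≤ α x)
    (hβ : ∀ x, 0 ≤ β x) (hdiv : ∀ x, divergenceF Q x = α x - β x) :
    ∃ σ, IsCouplingF α β σ ∧
      ∀ x y, 0 < σ (x, y) → Relation.ReflTransGen (fun a b => 0 < Q (a, b)) x y := by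
  by_cases hQ₀ : ∀ e, Q e = 0
  · obtain ⟨σ, hσ, hσ_diag⟩ := exists_coupling_of_flow_eq_zero hQ₀ hα hdiv
    exact ⟨σ, hσ, fun x y hxy => hσ_diag x y hxy ▸ .refl⟩
  push Not at hQ₀
  obtain ⟨e, he⟩ := hQ₀
  obtain ⟨u, w, huw, hw⟩ := hacyc.exists_sink_edge (lt_of_le_of_ne (hQ e) he.symm)
  have hne : u ≠ w := fun h => hacyc u (.single (h ▸ huw))
  have hw₀ : ∀ z, Q (w, z) = 0 := fun z => le_antisymm (not_lt.mp (hw z)) (hQ _)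
  have hq_le : Q (u, w) ≤ β w := apply_le_of_divergenceF_eq_sub hQ (hα w) hw₀ (hdiv w) u
  set Q' := Function.update Q (u, w) 0
  have hQ'₀ : ∀ e, 0 ≤ Q' e := fun e => by
    by_cases h : e = (u, w) <;> simp [Q', h, hQ e]
  have hQ'Q : ∀ e, 0 < Q' e → 0 < Q e := fun e he => by
    by_cases h : e = (u, w) <;> simp_all [Q']
  set β' := β + Pi.single u (Q (u, w)) - Pi.single w (Q (u, w))
  have hβ' := add_single_sub_single_nonneg hβ hne (hQ (u, w)) hq_le
  have hdiv' : ∀ x, divergenceF Q' x = α x - β' x := fun x => by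
    rw [divergenceF_update_zero, hdiv]
    simp only [β', Pi.add_apply, Pi.sub_apply]
    ring
  obtain ⟨σ', hσ', hσ'Q'⟩ := exists_coupling_of_acyclic_flow Q' hQ'₀
    (hacyc.mono fun a b => hQ'Q (a, b)) α β' hα hβ' hdiv'
  obtain ⟨σ, hσ, hσσ'⟩ :=
    hσ'.exists_move_column u w (hQ (u, w)) (by simpa [β', hne] using hβ u)
  refine ⟨σ, by convert hσ using 1; simp only [β']; abel, fun x y hxy => ?_⟩
  have hmono := Relation.ReflTransGen.mono (fun a b => hQ'Q (a, b))
  rcases hσσ' x y hxy with h | ⟨rfl, h⟩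
  · exact hmono _ _ (hσ'Q' x y h)
  · exact (hmono _ _ (hσ'Q' x u h)).tail huw
termination_by (Finset.univ.filter fun e => 0 < Q e).card
decreasing_by
  refine Finset.card_lt_card ((Finset.ssubset_iff_of_subset
    (Finset.monotone_filter_right _ fun e _ => hQ'Q e)).mpr ⟨(u, w), ?_, ?_⟩) <;>
  simp [Q', huw]

end Finite

theorem acyclic_flow_gives_economic_coupling_general {V : Type*} [Fintype V]
    (E : Set (V × V))
    (Q : V × V → ℝ) (hQ : IsFlow E Q)
    (hacyc : AcyclicRel fun a b => 0 < Q (a, b))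
    (μ₁ μ₂ : V → ℝ) (h₁ : IsProbF μ₁) (h₂ : IsProbF μ₂)
    (hdiv : ∀ x, divergenceF Q x = μ₁ x - μ₂ x) :
    ∃ ρ : V × V → ℝ, IsCouplingF μ₁ μ₂ ρ ∧
      (∀ p : V × V, p.1 ≠ p.2 →
        ¬ Relation.TransGen (fun a b => 0 < Q (a, b)) p.1 p.2 → ρ p = 0) ∧
      (∑ p : V × V, Set.indicator {p : V × V | p.1 ≠ p.2} ρ p) =
        (1 / 2) * ∑ x, |μ₁ x - μ₂ x| := by
  classical
  obtain ⟨σ, hσ, hσQ⟩ := exists_coupling_of_acyclic_flow Q hQ.1 hacyc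
    (fun x => (μ₁ x - μ₂ x)⁺) (fun x => (μ₁ x - μ₂ x)⁻)
    (fun _ => posPart_nonneg _) (fun _ => negPart_nonneg _) (fun x => by simp [hdiv])
  obtain ⟨τ, hρ, hτ, hmass⟩ := hσ.exists_add_diagonal h₁.1 h₂.1
  refine ⟨σ + τ, hρ, ?_, hmass⟩
  rintro ⟨x, y⟩ (hxy : x ≠ y) hQxy
  simp only [Pi.add_apply, hτ x y hxy, add_zero]
  by_contra hσxy
  rcases Relation.reflTransGen_iff_eq_or_transGen.mp
    (hσQ x y (lt_of_le_of_ne (hσ.1 _) (Ne.symm hσxy))) with h | h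
  exacts [hxy h.symm, hQxy h]

/-- **Economic coupling from a finite acyclic flow.**
From an acyclic flow `Q` on a finite digraph with `div Q = μ₁ - μ₂` one obtains a coupling
`ρ` of `μ₁, μ₂` supported on pairs joined by a directed path in `(V, E(Q))` and moving the
minimal total mass `½ ∑ₓ |μ₁(x) - μ₂(x)|`. -/
theorem acyclic_flow_gives_economic_coupling {V : Type*} [Fintype V]
    (E : Set (V × V)) (hloop : ∀ x : V, (x, x) ∉ E)
    (Q : V × V → ℝ) (hQ : IsFlow E Q)
    (hacyc : AcyclicRel fun a b => 0 < Q (a, b))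
    (μ₁ μ₂ : V → ℝ) (h₁ : IsProbF μ₁) (h₂ : IsProbF μ₂)
    (hdiv : ∀ x, divergenceF Q x = μ₁ x - μ₂ x) :
    ∃ ρ : V × V → ℝ, IsCouplingF μ₁ μ₂ ρ ∧
      (∀ p : V × V, p.1 ≠ p.2 →
        ¬ Relation.TransGen (fun a b => 0 < Q (a, b)) p.1 p.2 → ρ p = 0) ∧
      (∑ p : V × V, Set.indicator {p : V × V | p.1 ≠ p.2} ρ p) =
        (1 / 2) * ∑ x, |μ₁ x - μ₂ x| :=
  acyclic_flow_gives_economic_coupling_general E Q hQ hacyc μ₁ μ₂ h₁ h₂ hdiv
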